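/- arXiv:2207.06962 — 5 statements merged into one kernel-verified Lean document; each statement's English description precedes it below -/
import Mathlib

section
/- Let L be a complete lattice with a commutator operation as above. If a ⊔ b = ⊤ and a ⊔ c = ⊤, then a ⊔ [b,c] = ⊤ and a ⊔ (b ⊓ c) = ⊤. -/
/-! Expanding by distributivity, `⊤ = [a ⊔ b, a ⊔ c]` is a join of `[b, c]` and of
commutators each lying below `a`; and `[b, c] ≤ b ⊓ c`. -/

section Commutator

variable {L : Type*} {com : L → L → L}

theorem commutator_sup_left [CompleteLattice L]
    (hdist : ∀ (s : Set L) (b : L), com (sSup s) b = ⨆ x ∈ s, com x b) (x y z : L) :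
    com (x ⊔ y) z = com x z ⊔ com y z := by
  rw [← sSup_pair, hdist, iSup_pair]

theorem commutator_sup_sup_le [Lattice L]
    (hsup : ∀ x y z : L, com (x ⊔ y) z = com x z ⊔ com y z)
    (hcomm : ∀ a b : L, com a b = com b a) (hle : ∀ a b : L, com a b ≤ a ⊓ b) (a b c : L) :
    com (a ⊔ b) (a ⊔ c) ≤ a ⊔ com b c := by
  rw [hsup, hcomm b, hsup, hcomm c b, ← sup_assoc]
  gcongr
  exact sup_le ((hle _ _).trans inf_le_left) ((hle _ _).trans inf_le_left)

end Commutator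

theorem sup_commutator_eq_top_of_codisjoint_general {L : Type*} [CompleteLattice L]
    (com : L → L → L)
    (hcomm : ∀ a b : L, com a b = com b a)
    (hle : ∀ a b : L, com a b ≤ a ⊓ b)
    (hdist : ∀ (s : Set L) (b : L), com (sSup s) b = ⨆ x ∈ s, com x b)
    (htop : ∀ a : L, com ⊤ a = a)
    (a b c : L) (hab : a ⊔ b = ⊤) (hac : a ⊔ c = ⊤) :
    a ⊔ com b c = ⊤ ∧ a ⊔ (b ⊓ c) = ⊤ := by
  have hcom : a ⊔ com b c = ⊤ := eq_top_iff.mpr <|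
    calc ⊤ = com (a ⊔ b) (a ⊔ c) := by rw [hab, hac, htop]
      _ ≤ a ⊔ com b c := commutator_sup_sup_le (commutator_sup_left hdist) hcomm hle a b c
  exact ⟨hcom, eq_top_mono (sup_le_sup_left (hle b c) a) hcom⟩

theorem sup_commutator_eq_top_of_codisjoint {L : Type*} [CompleteLattice L]
    (com : L → L → L)
    (hcomm : ∀ a b : L, com a b = com b a)
    (hmono : ∀ a b c : L, a ≤ b → com a c ≤ com b c)
    (hle : ∀ a b : L, com a b ≤ a ⊓ b)
    (hdist : ∀ (s : Set L) (b : L), com (sSup s) b = ⨆ x ∈ s, com x b)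
    (htop : ∀ a : L, com ⊤ a = a)
    (a b c : L) (hab : a ⊔ b = ⊤) (hac : a ⊔ c = ⊤) :
    a ⊔ com b c = ⊤ ∧ a ⊔ (b ⊓ c) = ⊤ :=
  sup_commutator_eq_top_of_codisjoint_general com hcomm hle hdist htop a b c hab hac
end

section
/- Let L be a complete lattice with a commutator operation as above. Define [a,a]^1 = [a,a] and [a,a]^{n+1} = [[a,a]^n,[a,a]^n]. If a ⊔ b = ⊤ then [a,a]^n ⊔ [b,b]^n = ⊤ for every integer n ≥ 1. -/
/-!
If `x ⊔ y = ⊤`, expanding `⊤ = [x ⊔ y, x ⊔ y]` by distributivity gives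
`[x,x] ⊔ [x,y] ⊔ [y,x] ⊔ [y,y]`, and the cross terms are absorbed: `[x,y] ≤ x ⊓ y`, while
`x ⊓ y = [x ⊔ y, x ⊓ y] ≤ [x,x] ⊔ [y,y]`. So `[x,x] ⊔ [y,y] = ⊤`, and induction on `n` finishes.
-/

/-- Iterated commutator: `comPow com a n` is `[a,a]^n` for `n ≥ 1` (with `comPow com a 0 = a`). -/
def comPow {L : Type*} [CompleteLattice L] (com : L → L → L) (a : L) : ℕ → L
  | 0 => a
  | n + 1 => com (comPow com a n) (comPow com a n)

section Commutator

variable {L : Type*} {com : L → L → L}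

theorem com_sup_left_of_sSup [CompleteLattice L]
    (hdist : ∀ (s : Set L) (b : L), com (sSup s) b = ⨆ x ∈ s, com x b) (x y c : L) :
    com (x ⊔ y) c = com x c ⊔ com y c := by
  simpa only [sSup_pair, Set.mem_insert_iff, Set.mem_singleton_iff, iSup_or, iSup_sup_eq,
    iSup_iSup_eq_left] using hdist {x, y} c

theorem com_sup_right [Max L] (hcomm : ∀ a b : L, com a b = com b a)
    (hsup : ∀ x y c : L, com (x ⊔ y) c = com x c ⊔ com y c) (x y c : L) :
    com c (x ⊔ y) = com c x ⊔ com c y := by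
  rw [hcomm, hsup, hcomm x, hcomm y]

theorem com_mono_right [LE L] (hcomm : ∀ a b : L, com a b = com b a)
    (hmono : ∀ a b c : L, a ≤ b → com a c ≤ com b c) {a b c : L} (h : b ≤ c) :
    com a b ≤ com a c := by
  rw [hcomm a b, hcomm a c]
  exact hmono b c a h

section Step

variable [Lattice L] [OrderTop L] (hcomm : ∀ a b : L, com a b = com b a)
  (hmono : ∀ a b c : L, a ≤ b → com a c ≤ com b c)
  (hsup : ∀ x y c : L, com (x ⊔ y) c = com x c ⊔ com y c) (htop : ∀ a : L, com ⊤ a = a)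
include hcomm hmono hsup htop

theorem inf_le_com_self_sup_com_self {x y : L} (hxy : x ⊔ y = ⊤) :
    x ⊓ y ≤ com x x ⊔ com y y :=
  calc x ⊓ y = com (x ⊔ y) (x ⊓ y) := by rw [hxy, htop]
    _ = com x (x ⊓ y) ⊔ com y (x ⊓ y) := hsup x y _
    _ ≤ com x x ⊔ com y y :=
      sup_le_sup (com_mono_right hcomm hmono inf_le_left)
        (com_mono_right hcomm hmono inf_le_right)

theorem com_self_sup_com_self_eq_top (hle : ∀ a b : L, com a b ≤ a ⊓ b) {x y : L}
    (hxy : x ⊔ y = ⊤) : com x x ⊔ com y y = ⊤ := by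
  have hcross : com x y ≤ com x x ⊔ com y y :=
    (hle x y).trans (inf_le_com_self_sup_com_self hcomm hmono hsup htop hxy)
  have hexpand : com (x ⊔ y) (x ⊔ y) = com x x ⊔ com x y ⊔ (com y x ⊔ com y y) := by
    rw [hsup, com_sup_right hcomm hsup, com_sup_right hcomm hsup]
  refine top_le_iff.mp ?_
  rw [← htop ⊤, ← hxy, hexpand, hcomm y x]
  exact sup_le (sup_le le_sup_left hcross) (sup_le hcross le_sup_right)

end Step

theorem comPow_sup_comPow_eq_top [CompleteLattice L] (hcomm : ∀ a b : L, com a b = com b a)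
    (hmono : ∀ a b c : L, a ≤ b → com a c ≤ com b c)
    (hsup : ∀ x y c : L, com (x ⊔ y) c = com x c ⊔ com y c) (htop : ∀ a : L, com ⊤ a = a)
    (hle : ∀ a b : L, com a b ≤ a ⊓ b) {a b : L} (hab : a ⊔ b = ⊤) (n : ℕ) :
    comPow com a n ⊔ comPow com b n = ⊤ := by
  induction n with
  | zero => exact hab
  | succ n ih => exact com_self_sup_com_self_eq_top hcomm hmono hsup htop hle ih

end Commutator

theorem comPow_sup_comPow_eq_top_of_codisjoint {L : Type*} [CompleteLattice L]
    (com : L → L → L)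
    (hcomm : ∀ a b : L, com a b = com b a)
    (hmono : ∀ a b c : L, a ≤ b → com a c ≤ com b c)
    (hle : ∀ a b : L, com a b ≤ a ⊓ b)
    (hdist : ∀ (s : Set L) (b : L), com (sSup s) b = ⨆ x ∈ s, com x b)
    (htop : ∀ a : L, com ⊤ a = a)
    (a b : L) (hab : a ⊔ b = ⊤) :
    ∀ n : ℕ, 1 ≤ n → comPow com a n ⊔ comPow com b n = ⊤ :=
  fun n _ => comPow_sup_comPow_eq_top hcomm hmono (com_sup_left_of_sSup hdist) htop hle hab n
end

section
/- Under the same hypotheses, the set of radical elements RCon = {a ∈ L : ρ(a) = a}, with meet inherited from L and join defined by ⨆^· a_i = ρ(⨆ a_i), is a frame: binary meets distribute over arbitrary joins, i.e., a ⊓ ρ(⨆_i b_i) = ρ(⨆_i (a ⊓ b_i)) for a and all b_i radical. -/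
/-- `p` is a prime element with respect to the commutator `com`. -/
def ComPrime {L : Type*} [CompleteLattice L] (com : L → L → L) (p : L) : Prop :=
  p ≠ ⊤ ∧ ∀ a b : L, com a b ≤ p → a ≤ p ∨ b ≤ p

/-- The radical of `a`: the infimum of all primes above `a`. -/
def comRho {L : Type*} [CompleteLattice L] (com : L → L → L) (a : L) : L :=
  sInf {p | ComPrime com p ∧ a ≤ p}

/-!
A prime `p` above `⨆ i, a ⊓ b i` lies above every `[a, b i]`, so either `a ≤ p` or every
`b i ≤ p`; in both cases `p` lies above `a ⊓ ρ(⨆ i, b i)`. The reverse inequality is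
monotonicity of `ρ` together with `ρ a = a`.
-/

section

variable {L : Type*} [CompleteLattice L] {com : L → L → L}

theorem comRho_mono {a b : L} (hab : a ≤ b) : comRho com a ≤ comRho com b :=
  sInf_le_sInf fun _ ⟨hp, hbp⟩ => ⟨hp, hab.trans hbp⟩

theorem comRho_le {a p : L} (hp : ComPrime com p) (hap : a ≤ p) : comRho com a ≤ p :=
  sInf_le ⟨hp, hap⟩

theorem ComPrime.le_or_le_of_inf_le (hle : ∀ a b : L, com a b ≤ a ⊓ b) {p a b : L}
    (hp : ComPrime com p) (hab : a ⊓ b ≤ p) : a ≤ p ∨ b ≤ p :=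
  hp.2 a b ((hle a b).trans hab)

theorem ComPrime.le_or_iSup_le_of_iSup_inf_le (hle : ∀ a b : L, com a b ≤ a ⊓ b)
    {ι : Type*} {p a : L} {b : ι → L} (hp : ComPrime com p) (hab : ⨆ i, a ⊓ b i ≤ p) :
    a ≤ p ∨ ⨆ i, b i ≤ p := by
  by_cases hap : a ≤ p
  · exact Or.inl hap
  · exact Or.inr <| iSup_le fun i =>
      (hp.le_or_le_of_inf_le hle ((le_iSup (fun i => a ⊓ b i) i).trans hab)).resolve_left hap

theorem inf_comRho_iSup_le (hle : ∀ a b : L, com a b ≤ a ⊓ b) {ι : Type*} (a : L)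
    (b : ι → L) : a ⊓ comRho com (⨆ i, b i) ≤ comRho com (⨆ i, a ⊓ b i) :=
  le_sInf fun _ ⟨hp, hsup⟩ => (hp.le_or_iSup_le_of_iSup_inf_le hle hsup).elim
    (fun hap => inf_le_left.trans hap) (fun hbp => inf_le_right.trans (comRho_le hp hbp))

end

theorem radical_frame_distributivity_general {L : Type*} [CompleteLattice L]
    (com : L → L → L)
    (hle : ∀ a b : L, com a b ≤ a ⊓ b)
    {ι : Type*} (a : L) (b : ι → L)
    (ha : comRho com a = a) :
    a ⊓ comRho com (⨆ i, b i) = comRho com (⨆ i, a ⊓ b i) := by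
  refine le_antisymm (inf_comRho_iSup_le hle a b) (le_inf ?_ ?_)
  · calc comRho com (⨆ i, a ⊓ b i) ≤ comRho com a := comRho_mono (iSup_le fun _ => inf_le_left)
      _ = a := ha
  · exact comRho_mono (iSup_mono fun _ => inf_le_right)

theorem radical_frame_distributivity {L : Type*} [CompleteLattice L]
    (com : L → L → L)
    (hcomm : ∀ a b : L, com a b = com b a)
    (hmono : ∀ a b c : L, a ≤ b → com a c ≤ com b c)
    (hle : ∀ a b : L, com a b ≤ a ⊓ b)
    (hdist : ∀ (s : Set L) (b : L), com (sSup s) b = ⨆ x ∈ s, com x b)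
    (htop : ∀ a : L, com ⊤ a = a)
    (hex : ∀ a : L, a ≠ ⊤ → ∃ p, ComPrime com p ∧ a ≤ p)
    {ι : Type*} (a : L) (b : ι → L)
    (ha : comRho com a = a) (hb : ∀ i, comRho com (b i) = b i) :
    a ⊓ comRho com (⨆ i, b i) = comRho com (⨆ i, a ⊓ b i) :=
  radical_frame_distributivity_general com hle a b ha
end

section
/- Let L be a complete lattice with commutator as above, let K ⊆ L be the set of compact elements (assumed join-dense, closed under finite joins, with ⊥ ∈ K and ⊤ ∈ K), and let C be the smallest subset of L containing K and closed under binary join and binary commutator. Define a ≡ b iff ρ(a) = ρ(b) on C; then the quotient D = C/≡ with operations induced by ⊔ and [·,·] is a bounded distributive lattice. -/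
/-- `C`: the closure of the set of compact elements under binary joins and commutators. -/
inductive InC {L : Type*} [CompleteLattice L] (com : L → L → L) : L → Prop
  | base (a : L) : IsCompactElement a → InC com a
  | join {a b : L} : InC com a → InC com b → InC com (a ⊔ b)
  | comm {a b : L} : InC com a → InC com b → InC com (com a b)

universe u

namespace Reticulation

variable {L : Type u} [CompleteLattice L] (com : L → L → L)

abbrev Primes : Type u := {p : L // ComPrime com p}

def basicOpen (a : L) : Set (Primes com) := {p | ¬ a ≤ p.1}

variable {com}

lemma basicOpen_sup (a b : L) : basicOpen com (a ⊔ b) = basicOpen com a ∪ basicOpen com b := by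
  ext p
  simp only [basicOpen, Set.mem_ofPred_eq, Set.mem_union, sup_le_iff, not_and_or]

lemma basicOpen_com (hle : ∀ a b : L, com a b ≤ a ⊓ b) (a b : L) :
    basicOpen com (com a b) = basicOpen com a ∩ basicOpen com b := by
  ext p
  simp only [basicOpen, Set.mem_ofPred_eq, Set.mem_inter_iff, ← not_or]
  refine not_congr ⟨p.2.2 a b, ?_⟩
  rintro (ha | hb)
  · exact (hle a b).trans (inf_le_of_left_le ha)
  · exact (hle a b).trans (inf_le_of_right_le hb)

lemma basicOpen_bot : basicOpen com (⊥ : L) = ∅ := by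
  ext p
  simp [basicOpen]

lemma basicOpen_top : basicOpen com (⊤ : L) = Set.univ := by
  ext p
  simpa [basicOpen] using p.2.1

lemma basicOpen_eq_iff {a b : L} :
    basicOpen com a = basicOpen com b ↔ ∀ p, ComPrime com p → (a ≤ p ↔ b ≤ p) := by
  simp only [Set.ext_iff, basicOpen, Set.mem_ofPred_eq, not_iff_not, Subtype.forall]

lemma comRho_le_iff {a p : L} (hp : ComPrime com p) : comRho com a ≤ p ↔ a ≤ p :=
  ⟨(le_sInf fun _ hq => hq.2).trans, fun h => sInf_le ⟨hp, h⟩⟩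

lemma comRho_eq_iff {a b : L} :
    comRho com a = comRho com b ↔ ∀ p, ComPrime com p → (a ≤ p ↔ b ≤ p) := by
  refine ⟨fun h p hp => ?_, fun h => ?_⟩
  · rw [← comRho_le_iff hp, h, comRho_le_iff hp]
  · unfold comRho
    congr 1
    ext p
    exact and_congr_right (h p)

lemma basicOpen_eq_iff_comRho_eq {a b : L} :
    basicOpen com a = basicOpen com b ↔ comRho com a = comRho com b :=
  basicOpen_eq_iff.trans comRho_eq_iff.symm

variable (com) in
def basicOpenSublattice (hle : ∀ a b : L, com a b ≤ a ⊓ b) : Sublattice (Set (Primes com)) where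
  carrier := Set.range fun x : {a : L // InC com a} => basicOpen com x.1
  supClosed' := by
    rintro _ ⟨x, rfl⟩ _ ⟨y, rfl⟩
    exact ⟨⟨x.1 ⊔ y.1, x.2.join y.2⟩, basicOpen_sup x.1 y.1⟩
  infClosed' := by
    rintro _ ⟨x, rfl⟩ _ ⟨y, rfl⟩
    exact ⟨⟨com x.1 y.1, x.2.comm y.2⟩, basicOpen_com hle x.1 y.1⟩

end Reticulation

open Reticulation in
theorem reticulation_is_bounded_distributive_lattice_general {L : Type u} [CompleteLattice L]
    (com : L → L → L)
    (hle : ∀ a b : L, com a b ≤ a ⊓ b)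
    (hbotc : IsCompactElement (⊥ : L))
    (htopc : IsCompactElement (⊤ : L)) :
    ∃ (D : BddDistLat.{u}) (f : {a : L // InC com a} → ↥D),
      Function.Surjective f ∧
      (∀ x y : {a : L // InC com a}, f x = f y ↔ comRho com x.1 = comRho com y.1) ∧
      (∀ x y : {a : L // InC com a},
        f ⟨x.1 ⊔ y.1, InC.join x.2 y.2⟩ = f x ⊔ f y) ∧
      (∀ x y : {a : L // InC com a},
        f ⟨com x.1 y.1, InC.comm x.2 y.2⟩ = f x ⊓ f y) ∧
      f ⟨⊥, InC.base ⊥ hbotc⟩ = ⊥ ∧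
      f ⟨⊤, InC.base ⊤ htopc⟩ = ⊤ := by
  let S := basicOpenSublattice com hle
  let _ : BoundedOrder S := Subtype.boundedOrder
    ⟨⟨⊥, InC.base ⊥ hbotc⟩, basicOpen_bot⟩
    ⟨⟨⊤, InC.base ⊤ htopc⟩, basicOpen_top⟩
  refine ⟨BddDistLat.of S, fun x => ⟨basicOpen com x.1, x, rfl⟩, ?_, fun x y => ?_,
    fun x y => Subtype.ext (basicOpen_sup x.1 y.1),
    fun x y => Subtype.ext (basicOpen_com hle x.1 y.1),
    Subtype.ext basicOpen_bot, Subtype.ext basicOpen_top⟩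
  · rintro ⟨_, x, rfl⟩
    exact ⟨x, rfl⟩
  · exact Subtype.ext_iff.trans basicOpen_eq_iff_comRho_eq

/-- The quotient of `C` by `a ≡ b ↔ ρ(a) = ρ(b)`, with operations induced by `⊔` and the
commutator, is a bounded distributive lattice. -/
theorem reticulation_is_bounded_distributive_lattice {L : Type u} [CompleteLattice L]
    (com : L → L → L)
    (hcomm : ∀ a b : L, com a b = com b a)
    (hmono : ∀ a b c : L, a ≤ b → com a c ≤ com b c)
    (hle : ∀ a b : L, com a b ≤ a ⊓ b)
    (hdist : ∀ (s : Set L) (b : L), com (sSup s) b = ⨆ x ∈ s, com x b)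
    (htop : ∀ a : L, com ⊤ a = a)
    (hex : ∀ a : L, a ≠ ⊤ → ∃ p, ComPrime com p ∧ a ≤ p)
    (hcg : ∀ a : L, a = sSup {k | IsCompactElement k ∧ k ≤ a})
    (hbotc : IsCompactElement (⊥ : L))
    (htopc : IsCompactElement (⊤ : L)) :
    ∃ (D : BddDistLat.{u}) (f : {a : L // InC com a} → ↥D),
      Function.Surjective f ∧
      (∀ x y : {a : L // InC com a}, f x = f y ↔ comRho com x.1 = comRho com y.1) ∧
      (∀ x y : {a : L // InC com a},
        f ⟨x.1 ⊔ y.1, InC.join x.2 y.2⟩ = f x ⊔ f y) ∧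
      (∀ x y : {a : L // InC com a},
        f ⟨com x.1 y.1, InC.comm x.2 y.2⟩ = f x ⊓ f y) ∧
      f ⟨⊥, InC.base ⊥ hbotc⟩ = ⊥ ∧
      f ⟨⊤, InC.base ⊤ htopc⟩ = ⊤ :=
  reticulation_is_bounded_distributive_lattice_general com hle hbotc htopc
end

section
/- Call L quasi-commutative if for all compact a, b ∈ K there exists compact c with c ≤ [a,b] and ρ(c) = ρ([a,b]). If L is quasi-commutative, then for every θ ∈ C (the closure of K under joins and commutators) there exists compact c with c ≤ θ and ρ(c) = ρ(θ). -/
/-! The radical of `a` is determined by the set of primes above `a`, and for a prime `p` the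
condition `[a, b] ≤ p` only depends on whether `a ≤ p` and whether `b ≤ p`. Hence `ρ` respects
joins and commutators: replacing the arguments by elements with the same radicals does not change
the radical. The theorem follows by induction on `C`, the commutator case using quasi-commutativity
on the compact witnesses of the two arguments. -/

theorem IsCompactElement.sup {L : Type*} [CompleteLattice L] {a b : L}
    (ha : IsCompactElement a) (hb : IsCompactElement b) : IsCompactElement (a ⊔ b) := by
  classical
  simpa using CompleteLattice.isCompactElement_finsetSup (f := id) {a, b} (by simp [ha, hb])

section Radical

variable {L : Type*} [CompleteLattice L] {com : L → L → L}

theorem le_comRho (a : L) : a ≤ comRho com a :=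
  le_sInf fun _ hp => hp.2

theorem ComPrime.comRho_le_iff {p : L} (hp : ComPrime com p) {a : L} :
    comRho com a ≤ p ↔ a ≤ p :=
  ⟨(le_comRho a).trans, fun h => sInf_le ⟨hp, h⟩⟩

theorem comRho_eq_comRho_iff {a b : L} :
    comRho com a = comRho com b ↔ ∀ p, ComPrime com p → (a ≤ p ↔ b ≤ p) := by
  refine ⟨fun h p hp => ?_, fun h => ?_⟩
  · rw [← hp.comRho_le_iff, h, hp.comRho_le_iff]
  · unfold comRho
    congr 1
    ext p
    exact and_congr_right (h p)

theorem comRho_sup_congr {a a' b b' : L} (ha : comRho com a = comRho com a')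
    (hb : comRho com b = comRho com b') : comRho com (a ⊔ b) = comRho com (a' ⊔ b') := by
  rw [comRho_eq_comRho_iff] at *
  intro p hp
  simp only [sup_le_iff, ha p hp, hb p hp]

theorem ComPrime.com_le_iff (hle : ∀ a b : L, com a b ≤ a ⊓ b) {p : L} (hp : ComPrime com p)
    {a b : L} : com a b ≤ p ↔ a ≤ p ∨ b ≤ p := by
  refine ⟨hp.2 a b, ?_⟩
  rintro (h | h)
  · exact (hle a b).trans (inf_le_of_left_le h)
  · exact (hle a b).trans (inf_le_of_right_le h)

theorem comRho_com_congr (hle : ∀ a b : L, com a b ≤ a ⊓ b) {a a' b b' : L}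
    (ha : comRho com a = comRho com a') (hb : comRho com b = comRho com b') :
    comRho com (com a b) = comRho com (com a' b') := by
  rw [comRho_eq_comRho_iff] at *
  intro p hp
  rw [hp.com_le_iff hle, hp.com_le_iff hle, ha p hp, hb p hp]

end Radical

theorem com_le_com {L : Type*} [Preorder L] {com : L → L → L}
    (hcomm : ∀ a b : L, com a b = com b a) (hmono : ∀ a b c : L, a ≤ b → com a c ≤ com b c)
    {a a' b b' : L} (ha : a ≤ a') (hb : b ≤ b') : com a b ≤ com a' b' :=
  calc com a b ≤ com a' b := hmono _ _ _ ha
    _ = com b a' := hcomm _ _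
    _ ≤ com b' a' := hmono _ _ _ hb
    _ = com a' b' := hcomm _ _

theorem quasiCommutative_compact_below_in_C_general {L : Type*} [CompleteLattice L]
    (com : L → L → L)
    (hcomm : ∀ a b : L, com a b = com b a)
    (hmono : ∀ a b c : L, a ≤ b → com a c ≤ com b c)
    (hle : ∀ a b : L, com a b ≤ a ⊓ b)
    (hqc : ∀ a b : L, IsCompactElement a → IsCompactElement b →
      ∃ c : L, IsCompactElement c ∧ c ≤ com a b ∧
        comRho com c = comRho com (com a b)) :
    ∀ θ : L, InC com θ →
      ∃ c : L, IsCompactElement c ∧ c ≤ θ ∧ comRho com c = comRho com θ := by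
  intro θ hθ
  induction hθ with
  | base a ha => exact ⟨a, ha, le_rfl, rfl⟩
  | join _ _ iha ihb =>
    obtain ⟨c₁, hc₁, hc₁a, hρ₁⟩ := iha
    obtain ⟨c₂, hc₂, hc₂b, hρ₂⟩ := ihb
    exact ⟨c₁ ⊔ c₂, hc₁.sup hc₂, sup_le_sup hc₁a hc₂b, comRho_sup_congr hρ₁ hρ₂⟩
  | comm _ _ iha ihb =>
    obtain ⟨c₁, hc₁, hc₁a, hρ₁⟩ := iha
    obtain ⟨c₂, hc₂, hc₂b, hρ₂⟩ := ihb
    obtain ⟨c, hc, hc_le, hρ⟩ := hqc c₁ c₂ hc₁ hc₂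
    exact ⟨c, hc, hc_le.trans (com_le_com hcomm hmono hc₁a hc₂b),
      hρ.trans (comRho_com_congr hle hρ₁ hρ₂)⟩

theorem quasiCommutative_compact_below_in_C {L : Type*} [CompleteLattice L]
    (com : L → L → L)
    (hcomm : ∀ a b : L, com a b = com b a)
    (hmono : ∀ a b c : L, a ≤ b → com a c ≤ com b c)
    (hle : ∀ a b : L, com a b ≤ a ⊓ b)
    (hdist : ∀ (s : Set L) (b : L), com (sSup s) b = ⨆ x ∈ s, com x b)
    (htop : ∀ a : L, com ⊤ a = a)
    (hex : ∀ a : L, a ≠ ⊤ → ∃ p, ComPrime com p ∧ a ≤ p)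
    (hcg : ∀ a : L, a = sSup {k | IsCompactElement k ∧ k ≤ a})
    (htopc : IsCompactElement (⊤ : L))
    (hqc : ∀ a b : L, IsCompactElement a → IsCompactElement b →
      ∃ c : L, IsCompactElement c ∧ c ≤ com a b ∧
        comRho com c = comRho com (com a b)) :
    ∀ θ : L, InC com θ →
      ∃ c : L, IsCompactElement c ∧ c ≤ θ ∧ comRho com c = comRho com θ :=
  quasiCommutative_compact_below_in_C_general com hcomm hmono hle hqc
end
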